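/- If A : M → M is a bicomplex self-adjoint operator (A = A*, meaning (φ, Aψ) = (Aφ, ψ) for all φ, ψ) on a free T-module M with a hyperbolic-positive bicomplex scalar product, and A·ψ = λ·ψ with λ ∈ T and ψ not in the null-cone (i.e., both idempotent components of ψ are nonzero), then λ is a hyperbolic number: λ^†3 = λ, i.e., λ ∈ D = {a·e1 + b·e2 : a, b ∈ ℝ}. -/

import Mathlib

/-- Bicomplex numbers `w = z1 + z2·i2` with `z1, z2 ∈ ℂ(i1)`. -/
@[ext] structure Bc where
  z1 : ℂ
  z2 : ℂ

namespace Bc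

instance : Add Bc := ⟨fun a b => ⟨a.z1 + b.z1, a.z2 + b.z2⟩⟩
instance : Mul Bc := ⟨fun a b => ⟨a.z1 * b.z1 - a.z2 * b.z2, a.z1 * b.z2 + a.z2 * b.z1⟩⟩
instance : Neg Bc := ⟨fun a => ⟨-a.z1, -a.z2⟩⟩
instance : Zero Bc := ⟨⟨0, 0⟩⟩
instance : One Bc := ⟨⟨1, 0⟩⟩

@[simp] lemma add_def (a b : Bc) : a + b = ⟨a.z1 + b.z1, a.z2 + b.z2⟩ := rfl
@[simp] lemma mul_def (a b : Bc) :
    a * b = ⟨a.z1 * b.z1 - a.z2 * b.z2, a.z1 * b.z2 + a.z2 * b.z1⟩ := rfl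
@[simp] lemma neg_def (a : Bc) : -a = ⟨-a.z1, -a.z2⟩ := rfl
@[simp] lemma zero_def : (0 : Bc) = ⟨0, 0⟩ := rfl
@[simp] lemma one_def : (1 : Bc) = ⟨1, 0⟩ := rfl

instance : CommRing Bc where
  add_assoc a b c := by ext <;> simp <;> ring
  zero_add a := by ext <;> simp
  add_zero a := by ext <;> simp
  add_comm a b := by ext <;> simp <;> ring
  mul_assoc a b c := by ext <;> simp <;> ring
  one_mul a := by ext <;> simp
  mul_one a := by ext <;> simp
  left_distrib a b c := by ext <;> simp <;> ring
  right_distrib a b c := by ext <;> simp <;> ring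
  mul_comm a b := by ext <;> simp <;> ring
  neg_add_cancel a := by ext <;> simp
  zero_mul a := by ext <;> simp
  mul_zero a := by ext <;> simp
  nsmul := nsmulRec
  zsmul := zsmulRec

/-- The embedding of `ℂ(i1)` into the bicomplex numbers. -/
def ofC (z : ℂ) : Bc := ⟨z, 0⟩

def i1 : Bc := ⟨Complex.I, 0⟩
def i2 : Bc := ⟨0, 1⟩
def j : Bc := i1 * i2

/-- idempotent `e1 = (1+j)/2`. -/
noncomputable def e1 : Bc := ofC (1/2) * (1 + j)
/-- idempotent `e2 = (1-j)/2`. -/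
noncomputable def e2 : Bc := ofC (1/2) * (1 - j)

noncomputable def conj1 (w : Bc) : Bc := ⟨(starRingEnd ℂ) w.z1, (starRingEnd ℂ) w.z2⟩
def conj2 (w : Bc) : Bc := ⟨w.z1, -w.z2⟩
noncomputable def conj3 (w : Bc) : Bc := ⟨(starRingEnd ℂ) w.z1, -((starRingEnd ℂ) w.z2)⟩

/-- first idempotent component -/
def pi1 (w : Bc) : ℂ := w.z1 - w.z2 * Complex.I
/-- second idempotent component -/
def pi2 (w : Bc) : ℂ := w.z1 + w.z2 * Complex.I

noncomputable def mod1 (w : Bc) : ℝ := Real.sqrt ‖w.z1 ^ 2 + w.z2 ^ 2‖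
noncomputable def norm3 (w : Bc) : ℝ := Real.sqrt (‖w.z1‖ ^ 2 + ‖w.z2‖ ^ 2)

end Bc



namespace Bc

lemma pi1_mul (x y : Bc) : pi1 (x * y) = pi1 x * pi1 y := by
  simp only [pi1, mul_def]
  ring_nf
  rw [Complex.I_sq]
  ring

lemma pi2_mul (x y : Bc) : pi2 (x * y) = pi2 x * pi2 y := by
  simp only [pi2, mul_def]
  ring_nf
  rw [Complex.I_sq]
  ring

lemma e1_eq : e1 = ⟨1/2, Complex.I/2⟩ := by
  ext <;> simp [e1, j, i1, i2, ofC, sub_eq_add_neg] <;> ring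

lemma e2_eq : e2 = ⟨1/2, -(Complex.I/2)⟩ := by
  ext <;> simp [e2, j, i1, i2, ofC, sub_eq_add_neg] <;> ring

lemma pi1_e1 : pi1 e1 = 1 := by
  rw [e1_eq]; simp only [pi1]; ring_nf; rw [Complex.I_sq]; ring

lemma pi2_e1 : pi2 e1 = 0 := by
  rw [e1_eq]; simp only [pi2]; ring_nf; rw [Complex.I_sq]; ring

lemma pi1_e2 : pi1 e2 = 0 := by
  rw [e2_eq]; simp only [pi1]; ring_nf; rw [Complex.I_sq]; ring

lemma pi2_e2 : pi2 e2 = 1 := by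
  rw [e2_eq]; simp only [pi2]; ring_nf; rw [Complex.I_sq]; ring

lemma e1_mul_e2 : e1 * e2 = 0 := by
  rw [e1_eq, e2_eq]
  ext
  · show (1/2 : ℂ) * (1/2) - Complex.I/2 * -(Complex.I/2) = 0
    ring_nf
    rw [Complex.I_sq]
    ring
  · show (1/2 : ℂ) * -(Complex.I/2) + Complex.I/2 * (1/2) = 0
    ring

lemma conj3_mul (x y : Bc) : conj3 (x * y) = conj3 x * conj3 y := by
  ext <;> simp [conj3] <;> ring

lemma conj3_add (x y : Bc) : conj3 (x + y) = conj3 x + conj3 y := by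
  ext <;> simp [conj3] <;> ring

lemma conj3_e1 : conj3 e1 = e1 := by
  rw [e1_eq]; ext <;> (simp [conj3, map_div₀, Complex.conj_I, Complex.conj_ofNat]; try ring)

lemma conj3_e2 : conj3 e2 = e2 := by
  rw [e2_eq]; ext <;> (simp [conj3, map_div₀, Complex.conj_I, Complex.conj_ofNat]; try ring)

lemma conj3_ofC_real (a : ℝ) : conj3 (ofC (a : ℂ)) = ofC (a : ℂ) := by
  ext <;> simp [conj3, ofC]

end Bc

namespace Bc

lemma pi1_add (x y : Bc) : pi1 (x + y) = pi1 x + pi1 y := by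
  simp only [pi1, add_def]; ring

lemma pi2_add (x y : Bc) : pi2 (x + y) = pi2 x + pi2 y := by
  simp only [pi2, add_def]; ring

lemma pi1_ofC (z : ℂ) : pi1 (ofC z) = z := by simp [pi1, ofC]

lemma pi2_ofC (z : ℂ) : pi2 (ofC z) = z := by simp [pi2, ofC]

lemma pi1_zero : pi1 0 = 0 := by simp [pi1]

lemma pi2_zero : pi2 0 = 0 := by simp [pi2]

lemma ofC_zero : ofC 0 = (0 : Bc) := by ext <;> simp [ofC]

lemma eq_zero_of_pi (x : Bc) (h1 : pi1 x = 0) (h2 : pi2 x = 0) : x = 0 := by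
  simp only [pi1] at h1
  simp only [pi2] at h2
  ext
  · show x.z1 = 0
    linear_combination (h1 + h2) / 2
  · show x.z2 = 0
    have hI : x.z2 * Complex.I = 0 := by linear_combination (h2 - h1) / 2
    rcases mul_eq_zero.1 hI with h | h
    · exact h
    · exact absurd h Complex.I_ne_zero

end Bc

open Bc
/-- Free `Bc`-module of rank `n` with the canonical basis. -/
abbrev M (n : ℕ) := Fin n → Bc

/-- The associated complex vector space `V`: elements with coordinates in `ℂ(i1)`. -/
def Vset (n : ℕ) : Set (M n) := {X | ∀ l, (X l).z2 = 0}

/-- First idempotent projection `P₁ : M → V`. -/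
def P1 {n : ℕ} (X : M n) : M n := fun l => ofC (pi1 (X l))
/-- Second idempotent projection `P₂ : M → V`. -/
def P2 {n : ℕ} (X : M n) : M n := fun l => ofC (pi2 (X l))


/-- Eigenvalues of a bicomplex self-adjoint operator, for eigenvectors outside the
null-cone, are hyperbolic numbers: `λ^†3 = λ`. -/
theorem selfadjoint_eigenvalues_are_hyperbolic (n : ℕ) (ip : M n → M n → Bc)
    (h_add : ∀ X Y₁ Y₂ : M n, ip X (Y₁ + Y₂) = ip X Y₁ + ip X Y₂)
    (h_smul : ∀ (α : Bc) (X Y : M n), ip X (α • Y) = α * ip X Y)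
    (h_conj : ∀ X Y : M n, ip X Y = conj3 (ip Y X))
    (h_def : ∀ X : M n, ip X X = 0 ↔ X = 0)
    (h_closed : ∀ X Y : M n, X ∈ Vset n → Y ∈ Vset n → (ip X Y).z2 = 0)
    (h_pos : ∀ X : M n, ∃ a b : ℝ, 0 ≤ a ∧ 0 ≤ b ∧
      ip X X = ofC (a : ℂ) * e1 + ofC (b : ℂ) * e2)
    (A : M n →ₗ[Bc] M n)
    (h_sa : ∀ φ ψ : M n, ip φ (A ψ) = ip (A φ) ψ)
    (lam : Bc) (ψ : M n)
    (h_eig : A ψ = lam • ψ)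
    (h_nc : P1 ψ ≠ 0 ∧ P2 ψ ≠ 0) :
    conj3 lam = lam := by
  obtain ⟨hP1, hP2⟩ := h_nc
  obtain ⟨a, b, _, _, hd⟩ := h_pos ψ
  set d : Bc := ip ψ ψ with hdd
  have hdc : conj3 d = d := by
    rw [hd, conj3_add, conj3_mul, conj3_mul, conj3_e1, conj3_e2,
      conj3_ofC_real, conj3_ofC_real]
  have key : lam * d = conj3 lam * d := by
    have h1 : ip ψ (A ψ) = lam * d := by rw [h_eig, h_smul]
    have h2 : ip ψ (A ψ) = conj3 lam * d := by
      rw [h_sa, h_conj (A ψ) ψ, h1, conj3_mul, hdc]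
    rw [← h1, h2]
  have hip_e : ∀ (e : Bc), conj3 e = e → ip (e • ψ) (e • ψ) = e * e * d := by
    intro e he
    have step : ip (e • ψ) ψ = e * d := by
      rw [h_conj (e • ψ) ψ, h_smul, conj3_mul, he, hdc]
    rw [h_smul, step, ← mul_assoc]
  have ha : (a : ℂ) ≠ 0 := by
    intro h0
    have hz : ip (e1 • ψ) (e1 • ψ) = 0 := by
      rw [hip_e e1 conj3_e1, hd, h0, ofC_zero, zero_mul, zero_add,
        show e1 * e1 * (ofC (b : ℂ) * e2) = ofC (b : ℂ) * e1 * (e1 * e2) from by ring,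
        e1_mul_e2, mul_zero]
    have hz2 : e1 • ψ = 0 := (h_def _).1 hz
    apply hP1
    funext l
    have hl : e1 * ψ l = 0 := congrFun hz2 l
    have hp : pi1 (ψ l) = 0 := by
      have := congrArg pi1 hl
      rwa [pi1_mul, pi1_e1, one_mul, pi1_zero] at this
    show ofC (pi1 (ψ l)) = 0
    rw [hp, ofC_zero]
  have hb : (b : ℂ) ≠ 0 := by
    intro h0
    have hz : ip (e2 • ψ) (e2 • ψ) = 0 := by
      rw [hip_e e2 conj3_e2, hd, h0, ofC_zero, zero_mul, add_zero,
        show e2 * e2 * (ofC (a : ℂ) * e1) = ofC (a : ℂ) * e2 * (e1 * e2) from by ring,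
        e1_mul_e2, mul_zero]
    have hz2 : e2 • ψ = 0 := (h_def _).1 hz
    apply hP2
    funext l
    have hl : e2 * ψ l = 0 := congrFun hz2 l
    have hp : pi2 (ψ l) = 0 := by
      have := congrArg pi2 hl
      rwa [pi2_mul, pi2_e2, one_mul, pi2_zero] at this
    show ofC (pi2 (ψ l)) = 0
    rw [hp, ofC_zero]
  have hpi1d : pi1 d = a := by
    rw [hd, pi1_add, pi1_mul, pi1_mul, pi1_e1, pi1_e2, pi1_ofC, pi1_ofC]
    ring
  have hpi2d : pi2 d = b := by
    rw [hd, pi2_add, pi2_mul, pi2_mul, pi2_e1, pi2_e2, pi2_ofC, pi2_ofC]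
    ring
  have hmu : (conj3 lam - lam) * d = 0 := by
    rw [sub_mul, key, sub_self]
  have h1 : pi1 (conj3 lam - lam) = 0 := by
    have := congrArg pi1 hmu
    rw [pi1_mul, hpi1d, pi1_zero, mul_eq_zero] at this
    exact this.resolve_right ha
  have h2 : pi2 (conj3 lam - lam) = 0 := by
    have := congrArg pi2 hmu
    rw [pi2_mul, hpi2d, pi2_zero, mul_eq_zero] at this
    exact this.resolve_right hb
  exact sub_eq_zero.1 (eq_zero_of_pi _ h1 h2)
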